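/- For positive integers k, l_1, l_2, p and nonnegative integers m, n_1, n_2, the stuffle product z_k z_p^m * z_{l_1} z_p^{n_1} z_{l_2} z_p^{n_2} equals the five-term expression: Σ_{0≤i_1≤i_2≤m} z_k(z_p^{i_1} z_{l_1} + z_p^{i_1-1} z_{p+l_1})[(z_p^{i_2-i_1} * z_p^{n_1}) z_{l_2} + (z_p^{i_2-i_1-1} * z_p^{n_1}) z_{p+l_2}](z_p^{m-i_2} * z_p^{n_2}) + Σ_{0≤i_1≤n_1, 0≤i_2≤m} z_{l_1}(z_p^{i_1} z_k + z_p^{i_1-1} z_{p+k})[(z_p^{i_2} * z_p^{n_1-i_1}) z_{l_2} + (z_p^{i_2-1} * z_p^{n_1-i_1}) z_{p+l_2}](z_p^{m-i_2} * z_p^{n_2}) + z_{l_1} z_p^{n_1} z_{k+l_2}(z_p^m * z_p^{n_2}) + Σ_{0≤i≤n_2} z_{l_1} z_p^{n_1} z_{l_2}(z_p^i z_k + z_p^{i-1} z_{p+k})(z_p^m * z_p^{n_2-i}) + Σ_{0≤i≤m} z_{k+l_1}[(z_p^i * z_p^{n_1}) z_{l_2} + (z_p^{i-1} * z_p^{n_1})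 z_{p+l_2}](z_p^{m-i} * z_p^{n_2}), with convention z_p^{-1} = 0. -/

import Mathlib

open MonoidAlgebra Finset

abbrev H : Type := MonoidAlgebra ℚ (FreeMonoid ℕ+)

noncomputable def word (w : List ℕ+) : H := MonoidAlgebra.single (FreeMonoid.ofList w) 1

noncomputable def z (k : ℕ+) : H := word [k]

noncomputable def st : List ℕ+ → List ℕ+ → H
  | [], w => word w
  | k :: w1, [] => word (k :: w1)
  | k :: w1, l :: w2 =>
      z k * st w1 (l :: w2) + z l * st (k :: w1) w2 + z (k + l) * st w1 w2
termination_by a b => a.length + b.length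
decreasing_by all_goals (simp; try omega)

/-!
Write `P^a` for `List.replicate a p`. The key expansion splits `st (P^a) (P^n ++ l :: w)`
according to the number `j` of letters of `P^a` used up to and including the letter carrying
`l`: that prefix is `stBlock p l n j`, and what follows is `st (P^(a - j)) w`. The same
bookkeeping, applied to where the letter `k` lands inside a run `P^n`, expands
`st (k :: u) (P^n ++ v)`. Expanding `st (k :: P^m) (l1 :: ...)` once by the
defining recursion and applying these expansions to the three resulting terms gives the five sums;
the first term needs the key expansion twice, which produces the triangular double sum.
-/

lemma word_append (u v : List ℕ+) : word (u ++ v) = word u * word v := by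
  simp [word, MonoidAlgebra.single_mul_single]

lemma word_nil : word [] = 1 := rfl

lemma word_cons (a : ℕ+) (w : List ℕ+) : word (a :: w) = z a * word w :=
  word_append [a] w

lemma word_replicate_succ (p : ℕ+) (n : ℕ) :
    word (List.replicate (n + 1) p) = z p * word (List.replicate n p) := by
  rw [List.replicate_succ, word_cons]

lemma st_nil_left (w : List ℕ+) : st [] w = word w := by
  rw [st]

lemma st_nil_right (w : List ℕ+) : st w [] = word w := by
  cases w <;> rw [st]

lemma st_cons_cons (k l : ℕ+) (w1 w2 : List ℕ+) :
    st (k :: w1) (l :: w2) =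
      z k * st w1 (l :: w2) + z l * st (k :: w1) w2 + z (k + l) * st w1 w2 := by
  rw [st]

lemma st_replicate_succ_succ (p : ℕ+) (a b : ℕ) :
    st (List.replicate (a + 1) p) (List.replicate (b + 1) p)
      = z p * st (List.replicate a p) (List.replicate (b + 1) p)
        + z p * st (List.replicate (a + 1) p) (List.replicate b p)
        + z (p + p) * st (List.replicate a p) (List.replicate b p) := by
  rw [List.replicate_succ, List.replicate_succ (n := b), st_cons_cons, ← List.replicate_succ]

/-- The terms of `st (List.replicate j p) (List.replicate n p ++ [l])` whose last letter is
`l` or `p + l`. -/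
noncomputable def stBlock (p l : ℕ+) (n j : ℕ) : H :=
  st (List.replicate j p) (List.replicate n p) * z l
    + if 1 ≤ j then st (List.replicate (j - 1) p) (List.replicate n p) * z (p + l) else 0

section stBlock

variable (p l : ℕ+)

lemma stBlock_apply_zero (n : ℕ) : stBlock p l n 0 = word (List.replicate n p) * z l := by
  simp [stBlock, st_nil_left]

lemma stBlock_zero_apply (j : ℕ) :
    stBlock p l 0 j = word (List.replicate j p) * z l
      + if 1 ≤ j then word (List.replicate (j - 1) p) * z (p + l) else 0 := by
  simp only [stBlock, List.replicate_zero, st_nil_right]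

lemma stBlock_zero_succ (j : ℕ) :
    stBlock p l 0 (j + 1) = z p * stBlock p l 0 j + if j = 0 then z (p + l) else 0 := by
  cases j <;> simp [stBlock_zero_apply, word_replicate_succ, word_nil, z, mul_add, mul_assoc]

lemma stBlock_succ_zero (n : ℕ) : stBlock p l (n + 1) 0 = z p * stBlock p l n 0 := by
  simp [stBlock_apply_zero, word_replicate_succ, mul_assoc]

lemma stBlock_succ_succ (n j : ℕ) :
    stBlock p l (n + 1) (j + 1)
      = z p * stBlock p l (n + 1) j + z p * stBlock p l n (j + 1)
        + z (p + p) * stBlock p l n j := by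
  cases j with
  | zero =>
    simp only [stBlock, st_replicate_succ_succ p 0 n, List.replicate_zero, st_nil_left,
      word_replicate_succ, zero_add, le_refl, if_true, Nat.sub_self, nonpos_iff_eq_zero,
      one_ne_zero, if_false, add_zero, add_mul, mul_add, mul_assoc]
    abel
  | succ j =>
    simp only [stBlock, st_replicate_succ_succ, le_add_iff_nonneg_left, zero_le, if_true,
      add_tsub_cancel_right, mul_add, add_mul, mul_assoc]
    abel

end stBlock

lemma st_replicate_replicate_append_cons (p l : ℕ+) (w : List ℕ+) (a n : ℕ) :
    st (List.replicate a p) (List.replicate n p ++ l :: w)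
      = ∑ j ∈ range (a + 1), stBlock p l n j * st (List.replicate (a - j) p) w := by
  induction a generalizing n with
  | zero => simp [st_nil_left, word_append, word_cons, stBlock_apply_zero, mul_assoc]
  | succ a iha =>
    induction n with
    | zero =>
      have h0 := iha 0
      simp only [List.replicate_zero, List.nil_append] at h0 ⊢
      rw [List.replicate_succ, st_cons_cons, ← List.replicate_succ, h0]
      conv_rhs => rw [sum_range_succ']
      simp only [Nat.succ_sub_succ, stBlock_zero_succ, Nat.sub_zero, add_mul, ite_mul,
        zero_mul, sum_add_distrib, mul_assoc, ← mul_sum, sum_ite_eq', mem_range]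
      simp only [add_pos_iff, zero_lt_one, or_true, if_true, stBlock_apply_zero,
        List.replicate_zero, word_nil, one_mul]
      abel
    | succ n ihn =>
      have e : List.replicate (n + 1) p ++ l :: w = p :: (List.replicate n p ++ l :: w) := rfl
      rw [e, List.replicate_succ (n := a), st_cons_cons, ← e, ← List.replicate_succ, iha, ihn, iha,
        sum_range_succ' (n := a + 1), sum_range_succ' (n := a + 1)]
      simp only [Nat.succ_sub_succ, Nat.sub_zero, stBlock_succ_succ, stBlock_succ_zero,
        add_mul, mul_add, sum_add_distrib, mul_sum, mul_assoc]
      abel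

lemma st_replicate_cons_replicate_append_cons (p l1 l2 : ℕ+) (w : List ℕ+) (m n : ℕ) :
    st (List.replicate m p) (l1 :: (List.replicate n p ++ l2 :: w))
      = ∑ s ∈ range (m + 1), ∑ i ∈ range (s + 1),
          stBlock p l1 0 i * stBlock p l2 n (s - i) * st (List.replicate (m - s) p) w := by
  have h := st_replicate_replicate_append_cons p l1 (List.replicate n p ++ l2 :: w) m 0
  rw [List.replicate_zero, List.nil_append] at h
  simp only [h, st_replicate_replicate_append_cons, mul_sum]
  let F i j := stBlock p l1 0 i * stBlock p l2 n j * st (List.replicate (m - i - j) p) w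
  calc _ = ∑ i ∈ range (m + 1), ∑ j ∈ range (m + 1 - i), F i j := by
        refine sum_congr rfl fun i hi => ?_
        rw [show m + 1 - i = m - i + 1 by grind]
        exact sum_congr rfl fun j _ => (mul_assoc ..).symm
    _ = ∑ s ∈ range (m + 1), ∑ i ∈ range (s + 1), F i (s - i) := (sum_range_diag_flip ..).symm
    _ = _ := sum_congr rfl fun s hs => sum_congr rfl fun i hi => by
        simp only [mem_range] at hs hi
        simp only [F, show m - i - (s - i) = m - s by omega]

lemma st_cons_replicate_append (p k : ℕ+) (u v : List ℕ+) (n : ℕ) :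
    st (k :: u) (List.replicate n p ++ v)
      = ∑ i ∈ range (n + 1), stBlock p k 0 i * st u (List.replicate (n - i) p ++ v)
        + word (List.replicate n p) * (st (k :: u) v - z k * st u v) := by
  induction n with
  | zero => simp [stBlock_apply_zero, word_nil]
  | succ n ih =>
    have e : List.replicate (n + 1) p ++ v = p :: (List.replicate n p ++ v) := rfl
    rw [e, st_cons_cons, ← e, ih]
    conv_rhs => rw [sum_range_succ']
    simp only [Nat.succ_sub_succ, stBlock_zero_succ, Nat.sub_zero, add_mul, ite_mul,
      zero_mul, sum_add_distrib, mul_assoc, ← mul_sum, sum_ite_eq', mem_range,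
      word_replicate_succ]
    simp only [add_pos_iff, zero_lt_one, or_true, if_true, stBlock_apply_zero,
      List.replicate_zero, word_nil, one_mul, mul_add, add_comm k p]
    abel

lemma st_cons_replicate (p k : ℕ+) (u : List ℕ+) (n : ℕ) :
    st (k :: u) (List.replicate n p)
      = ∑ i ∈ range (n + 1), stBlock p k 0 i * st u (List.replicate (n - i) p) := by
  simpa [st_nil_right, word_cons] using st_cons_replicate_append p k u [] n

theorem st_one_two (k l1 l2 p : ℕ+) (m n1 n2 : ℕ) :
    st (k :: List.replicate m p) (l1 :: (List.replicate n1 p ++ l2 :: List.replicate n2 p)) =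
      (∑ i2 ∈ Finset.range (m + 1), ∑ i1 ∈ Finset.range (i2 + 1),
        z k * (word (List.replicate i1 p) * z l1
            + if 1 ≤ i1 then word (List.replicate (i1 - 1) p) * z (p + l1) else 0)
        * (st (List.replicate (i2 - i1) p) (List.replicate n1 p) * z l2
            + if i1 < i2 then
                st (List.replicate (i2 - i1 - 1) p) (List.replicate n1 p) * z (p + l2)
              else 0)
        * st (List.replicate (m - i2) p) (List.replicate n2 p))
      + (∑ i1 ∈ Finset.range (n1 + 1), ∑ i2 ∈ Finset.range (m + 1),
        z l1 * (word (List.replicate i1 p) * z k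
            + if 1 ≤ i1 then word (List.replicate (i1 - 1) p) * z (p + k) else 0)
        * (st (List.replicate i2 p) (List.replicate (n1 - i1) p) * z l2
            + if 1 ≤ i2 then
                st (List.replicate (i2 - 1) p) (List.replicate (n1 - i1) p) * z (p + l2)
              else 0)
        * st (List.replicate (m - i2) p) (List.replicate n2 p))
      + word (l1 :: List.replicate n1 p) * z (k + l2)
          * st (List.replicate m p) (List.replicate n2 p)
      + (∑ i ∈ Finset.range (n2 + 1),
        word (l1 :: List.replicate n1 p) * z l2
        * (word (List.replicate i p) * z k
            + if 1 ≤ i then word (List.replicate (i - 1) p) * z (p + k) else 0)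
        * st (List.replicate m p) (List.replicate (n2 - i) p))
      + (∑ i ∈ Finset.range (m + 1),
        z (k + l1)
        * (st (List.replicate i p) (List.replicate n1 p) * z l2
            + if 1 ≤ i then st (List.replicate (i - 1) p) (List.replicate n1 p) * z (p + l2)
              else 0)
        * st (List.replicate (m - i) p) (List.replicate n2 p)) := by
  have hlt : ∀ a b : ℕ, a < b ↔ 1 ≤ b - a := by omega
  simp only [hlt, ← stBlock_zero_apply, ← stBlock.eq_1, word_cons]
  rw [st_cons_cons, st_replicate_cons_replicate_append_cons, st_cons_replicate_append,
    st_cons_cons, st_cons_replicate, st_replicate_replicate_append_cons]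
  simp only [st_replicate_replicate_append_cons, mul_add, mul_sub, mul_assoc, mul_sum]
  abel
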